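/- arXiv:math/0503062 — 4 statements merged into one kernel-verified Lean document; each statement's English description precedes it below -/
import Mathlib

section
/- Let Z be a real (q+r)×p matrix with ᵀZ·Z < 1_p (i.e. 1_p − ᵀZ·Z is positive definite), and write Z in blocks as Z = (Z₁; Z₂) with Z₁ of size q×p and Z₂ of size r×p. Then det(1_p − ᵀZ₁·Z₁) = det(1_p − ᵀZ·Z) · det(1_r + Z₂·(1_p − ᵀZ·Z)⁻¹·ᵀZ₂). -/
open Matrix

/-- Determinant identity for the blocks of `Z = (Z₁; Z₂)` with `ᵀZ·Z < 1ₚ`: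
`det(1 − ᵀZ₁Z₁) = det(1 − ᵀZZ) · det(1ᵣ + Z₂ (1 − ᵀZZ)⁻¹ ᵀZ₂)`. -/
theorem stmt_4 (p q r : ℕ) (Z₁ : Matrix (Fin q) (Fin p) ℝ) (Z₂ : Matrix (Fin r) (Fin p) ℝ)
    (hZ : ((1 : Matrix (Fin p) (Fin p) ℝ) - (fromRows Z₁ Z₂)ᵀ * fromRows Z₁ Z₂).PosDef) :
    ((1 : Matrix (Fin p) (Fin p) ℝ) - Z₁ᵀ * Z₁).det =
      ((1 : Matrix (Fin p) (Fin p) ℝ) - (fromRows Z₁ Z₂)ᵀ * fromRows Z₁ Z₂).det *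
        ((1 : Matrix (Fin r) (Fin r) ℝ) +
          Z₂ * ((1 : Matrix (Fin p) (Fin p) ℝ) - (fromRows Z₁ Z₂)ᵀ * fromRows Z₁ Z₂)⁻¹ * Z₂ᵀ).det := by
  set A : Matrix (Fin p) (Fin p) ℝ :=
    (1 : Matrix (Fin p) (Fin p) ℝ) - (fromRows Z₁ Z₂)ᵀ * fromRows Z₁ Z₂ with hA
  have hmul : (fromRows Z₁ Z₂)ᵀ * fromRows Z₁ Z₂ = Z₁ᵀ * Z₁ + Z₂ᵀ * Z₂ := by
    rw [transpose_fromRows, fromCols_mul_fromRows]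
  have hdet : IsUnit A.det := isUnit_iff_ne_zero.mpr (ne_of_gt hZ.det_pos)
  have key : (1 : Matrix (Fin p) (Fin p) ℝ) - Z₁ᵀ * Z₁ = A * (1 + A⁻¹ * Z₂ᵀ * Z₂) := by
    rw [mul_add, mul_one, ← Matrix.mul_assoc, ← Matrix.mul_assoc, mul_nonsing_inv _ hdet, Matrix.one_mul, hA, hmul]
    abel
  rw [key, det_mul, det_one_add_mul_comm (A⁻¹ * Z₂ᵀ) Z₂, ← Matrix.mul_assoc]
end

section
/- Let Q be the (p+q+r)×(p+q+r) diagonal matrix diag(1_{q+r}, −1_p), and let g = [[A, B],[C, D]] (with A of size (q+r)×(q+r), B of size (q+r)×p, C of size p×(q+r), D of size p×p) satisfy ᵀg·Q·g = Q. Let Z be a real (q+r)×p matrix with ᵀZ·Z < 1_p. Then the matrix C·Z + D is invertible, and the matrix gZ := (A·Z + B)·(C·Z + D)⁻¹ again satisfies ᵀ(gZ)·(gZ) < 1_p. -/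
/-!
Stack `Z` over the identity: `g` maps the column block `[Z; 1]` to `[AZ + B; CZ + D]`, and
`[X; Y]ᵀ Q [X; Y] = XᵀX − YᵀY` for `Q = diag(1, −1)`. Since `g` preserves `Q`, this gives
`(CZ + D)ᵀ(CZ + D) − (AZ + B)ᵀ(AZ + B) = 1 − ZᵀZ`, which is positive definite. Hence
`(CZ + D)ᵀ(CZ + D)` is positive definite, so `CZ + D` is invertible, and conjugating by its inverse
turns the identity into `1 − (gZ)ᵀ(gZ) = (CZ + D)⁻ᵀ (1 − ZᵀZ) (CZ + D)⁻¹`.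
-/

open Matrix

namespace Matrix

variable {m n : Type*} [Fintype m] [Fintype n] [DecidableEq n]

lemma transpose_fromRows_mul_fromBlocks_one_neg_one_mul_fromRows {R k : Type*} [CommRing R]
    [DecidableEq m] (X : Matrix m k R) (Y : Matrix n k R) :
    (fromRows X Y)ᵀ * fromBlocks (1 : Matrix m m R) 0 0 (-1 : Matrix n n R) * fromRows X Y =
      Xᵀ * X - Yᵀ * Y := by
  rw [transpose_fromRows, fromCols_mul_fromBlocks, fromCols_mul_fromRows]
  simp only [Matrix.mul_one, Matrix.mul_zero, Matrix.mul_neg, Matrix.neg_mul, add_zero, zero_add,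
    sub_eq_add_neg]

lemma transpose_mul_sub_transpose_mul_of_fromBlocks_preserves {R : Type*} [CommRing R]
    [DecidableEq m]
    {A : Matrix m m R} {B : Matrix m n R} {C : Matrix n m R} {D : Matrix n n R}
    (hg : (fromBlocks A B C D)ᵀ * fromBlocks (1 : Matrix m m R) 0 0 (-1 : Matrix n n R) *
        fromBlocks A B C D = fromBlocks (1 : Matrix m m R) 0 0 (-1 : Matrix n n R))
    (Z : Matrix m n R) :
    (A * Z + B)ᵀ * (A * Z + B) - (C * Z + D)ᵀ * (C * Z + D) = Zᵀ * Z - 1 := by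
  set Q := fromBlocks (1 : Matrix m m R) 0 0 (-1 : Matrix n n R) with hQ
  set F := fromRows Z (1 : Matrix n n R) with hF
  have hgF : fromBlocks A B C D * F = fromRows (A * Z + B) (C * Z + D) := by
    rw [hF, fromBlocks_mul_fromRows, Matrix.mul_one, Matrix.mul_one]
  calc (A * Z + B)ᵀ * (A * Z + B) - (C * Z + D)ᵀ * (C * Z + D)
      = (fromBlocks A B C D * F)ᵀ * Q * (fromBlocks A B C D * F) := by
        rw [hgF, hQ, transpose_fromRows_mul_fromBlocks_one_neg_one_mul_fromRows]
    _ = Fᵀ * ((fromBlocks A B C D)ᵀ * Q * fromBlocks A B C D) * F := by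
        rw [transpose_mul]
        simp only [Matrix.mul_assoc]
    _ = Zᵀ * Z - 1 := by
        rw [hg, hQ, hF, transpose_fromRows_mul_fromBlocks_one_neg_one_mul_fromRows, transpose_one,
          Matrix.one_mul]

lemma isUnit_of_posDef_transpose_mul_self_sub (M : Matrix n n ℝ) (N : Matrix m n ℝ)
    (h : (Mᵀ * M - Nᵀ * N).PosDef) : IsUnit M := by
  have hNN : (Nᵀ * N).PosSemidef := by
    simpa only [conjTranspose_eq_transpose_of_trivial] using posSemidef_conjTranspose_mul_self N
  have hMM : (Mᵀ * M).PosDef := by simpa using h.add_posSemidef hNN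
  have hdet : IsUnit (Mᵀ.det * M.det) := by
    rw [← det_mul]
    exact (isUnit_iff_isUnit_det _).mp hMM.isUnit
  exact (isUnit_iff_isUnit_det M).mpr (isUnit_of_mul_isUnit_right hdet)

lemma one_sub_transpose_mul_self_mul_inv_eq {M : Matrix n n ℝ} (hM : IsUnit M)
    (N : Matrix m n ℝ) :
    1 - (N * M⁻¹)ᵀ * (N * M⁻¹) = (M⁻¹)ᵀ * (Mᵀ * M - Nᵀ * N) * M⁻¹ := by
  have hMM : (M⁻¹)ᵀ * (Mᵀ * M) * M⁻¹ = 1 := by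
    have hdet := (isUnit_iff_isUnit_det M).mp hM
    rw [← Matrix.mul_assoc, ← transpose_mul, mul_nonsing_inv M hdet, transpose_one,
      Matrix.one_mul, mul_nonsing_inv M hdet]
  rw [Matrix.mul_sub, Matrix.sub_mul, hMM, transpose_mul]
  simp only [Matrix.mul_assoc]

lemma posDef_one_sub_transpose_mul_self_mul_inv {M : Matrix n n ℝ} {N : Matrix m n ℝ}
    (h : (Mᵀ * M - Nᵀ * N).PosDef) : (1 - (N * M⁻¹)ᵀ * (N * M⁻¹)).PosDef := by
  have hM := isUnit_of_posDef_transpose_mul_self_sub M N h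
  rw [one_sub_transpose_mul_self_mul_inv_eq hM, ← conjTranspose_eq_transpose_of_trivial]
  exact h.conjTranspose_mul_mul_same
    (mulVec_injective_iff_isUnit.mpr (isUnit_nonsing_inv_iff.mpr hM))

end Matrix

/-- `O(q+r, p)` acts on the bounded matrix model `{Z : ᵀZ·Z < 1ₚ}` by generalized
fractional linear transformations: `C·Z + D` is invertible and
`gZ = (A·Z+B)(C·Z+D)⁻¹` again lies in the domain. -/
theorem stmt_5 (p q r : ℕ)
    (A : Matrix (Fin (q + r)) (Fin (q + r)) ℝ) (B : Matrix (Fin (q + r)) (Fin p) ℝ)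
    (C : Matrix (Fin p) (Fin (q + r)) ℝ) (D : Matrix (Fin p) (Fin p) ℝ)
    (hg : (fromBlocks A B C D)ᵀ *
        fromBlocks (1 : Matrix (Fin (q + r)) (Fin (q + r)) ℝ) 0 0
          (-(1 : Matrix (Fin p) (Fin p) ℝ)) * fromBlocks A B C D =
      fromBlocks (1 : Matrix (Fin (q + r)) (Fin (q + r)) ℝ) 0 0
        (-(1 : Matrix (Fin p) (Fin p) ℝ)))
    (Z : Matrix (Fin (q + r)) (Fin p) ℝ)
    (hZ : ((1 : Matrix (Fin p) (Fin p) ℝ) - Zᵀ * Z).PosDef) :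
    IsUnit (C * Z + D) ∧
      ((1 : Matrix (Fin p) (Fin p) ℝ) -
        ((A * Z + B) * (C * Z + D)⁻¹)ᵀ * ((A * Z + B) * (C * Z + D)⁻¹)).PosDef := by
  have key : (C * Z + D)ᵀ * (C * Z + D) - (A * Z + B)ᵀ * (A * Z + B) = 1 - Zᵀ * Z := by
    rw [← neg_sub, transpose_mul_sub_transpose_mul_of_fromBlocks_preserves hg, neg_sub]
  rw [← key] at hZ
  exact ⟨isUnit_of_posDef_transpose_mul_self_sub _ _ hZ,
    posDef_one_sub_transpose_mul_self_mul_inv hZ⟩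
end

section
/- Let Y be a real n×p matrix and let ξ(Y) be the (n+p)×(n+p) matrix [[0, Y],[ᵀY, 0]]. Then the matrix exponential exp(ξ(Y)) has block form [[Σ_{k≥0} (Y·ᵀY)^k/(2k)!, Σ_{k≥0} (Y·ᵀY)^k·Y/(2k+1)!],[Σ_{k≥0} (ᵀY·Y)^k·ᵀY/(2k+1)!, Σ_{k≥0} (ᵀY·Y)^k/(2k)!]]. -/
/-!
`ξ(Y) = [[0, Y], [Yᵀ, 0]]` squares to the block-diagonal matrix `[[Y Yᵀ, 0], [0, Yᵀ Y]]`, so the even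
powers of `ξ(Y)` are block diagonal and the odd ones block anti-diagonal. Splitting the exponential
series into even and odd terms and summing each block separately gives the four series.
-/

open Matrix

namespace Matrix

section Summation

variable {ι l m n o α : Type*} [AddCommMonoid α] [TopologicalSpace α]
  {f₁ : ι → Matrix n l α} {f₂ : ι → Matrix n m α} {f₃ : ι → Matrix o l α}
  {f₄ : ι → Matrix o m α}

theorem hasSum_iff {f : ι → Matrix m n α} {a : Matrix m n α} :
    HasSum f a ↔ ∀ i j, HasSum (fun x => f x i j) (a i j) :=
  Pi.hasSum.trans (forall_congr' fun _ => Pi.hasSum)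

theorem hasSum_fromBlocks_iff {a₁ : Matrix n l α} {a₂ : Matrix n m α} {a₃ : Matrix o l α}
    {a₄ : Matrix o m α} :
    HasSum (fun i => fromBlocks (f₁ i) (f₂ i) (f₃ i) (f₄ i)) (fromBlocks a₁ a₂ a₃ a₄) ↔
      HasSum f₁ a₁ ∧ HasSum f₂ a₂ ∧ HasSum f₃ a₃ ∧ HasSum f₄ a₄ := by
  simp only [hasSum_iff, Sum.forall, fromBlocks_apply₁₁, fromBlocks_apply₁₂, fromBlocks_apply₂₁,
    fromBlocks_apply₂₂, forall_and]
  tauto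

theorem summable_fromBlocks_iff :
    Summable (fun i => fromBlocks (f₁ i) (f₂ i) (f₃ i) (f₄ i)) ↔
      Summable f₁ ∧ Summable f₂ ∧ Summable f₃ ∧ Summable f₄ := by
  constructor
  · rintro ⟨a, ha⟩
    rw [← fromBlocks_toBlocks a, hasSum_fromBlocks_iff] at ha
    exact ⟨ha.1.summable, ha.2.1.summable, ha.2.2.1.summable, ha.2.2.2.summable⟩
  · rintro ⟨h₁, h₂, h₃, h₄⟩
    exact (hasSum_fromBlocks_iff.2 ⟨h₁.hasSum, h₂.hasSum, h₃.hasSum, h₄.hasSum⟩).summable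

theorem tsum_fromBlocks [T2Space α]
    (h : Summable fun i => fromBlocks (f₁ i) (f₂ i) (f₃ i) (f₄ i)) :
    ∑' i, fromBlocks (f₁ i) (f₂ i) (f₃ i) (f₄ i) =
      fromBlocks (∑' i, f₁ i) (∑' i, f₂ i) (∑' i, f₃ i) (∑' i, f₄ i) := by
  obtain ⟨h₁, h₂, h₃, h₄⟩ := summable_fromBlocks_iff.1 h
  exact (hasSum_fromBlocks_iff.2 ⟨h₁.hasSum, h₂.hasSum, h₃.hasSum, h₄.hasSum⟩).tsum_eq

end Summation

section OffDiagonal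

variable {m n : Type*} [Fintype m] [Fintype n] [DecidableEq m] [DecidableEq n]

theorem fromBlocks_offDiagonal_pow_two_mul {α : Type*} [Semiring α] (B : Matrix m n α)
    (C : Matrix n m α) (k : ℕ) :
    fromBlocks 0 B C 0 ^ (2 * k) = fromBlocks ((B * C) ^ k) 0 0 ((C * B) ^ k) := by
  induction k with
  | zero => simp [fromBlocks_one]
  | succ k ih =>
    rw [Nat.mul_succ, pow_add, ih, sq, fromBlocks_multiply, fromBlocks_multiply]
    simp [pow_succ]

theorem fromBlocks_offDiagonal_pow_two_mul_add_one {α : Type*} [Semiring α] (B : Matrix m n α)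
    (C : Matrix n m α) (k : ℕ) :
    fromBlocks 0 B C 0 ^ (2 * k + 1) = fromBlocks 0 ((B * C) ^ k * B) ((C * B) ^ k * C) 0 := by
  rw [pow_succ, fromBlocks_offDiagonal_pow_two_mul, fromBlocks_multiply]
  simp

variable {𝕂 : Type*} [RCLike 𝕂]

theorem summable_expSeries (A : Matrix m m 𝕂) :
    Summable fun k => ((Nat.factorial k : 𝕂)⁻¹) • A ^ k := by
  open scoped Norms.Operator in exact NormedSpace.expSeries_summable' A

theorem exp_fromBlocks_offDiagonal (B : Matrix m n 𝕂) (C : Matrix n m 𝕂) :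
    NormedSpace.exp (fromBlocks 0 B C 0) =
      fromBlocks
        (∑' k : ℕ, ((Nat.factorial (2 * k) : 𝕂))⁻¹ • (B * C) ^ k)
        (∑' k : ℕ, ((Nat.factorial (2 * k + 1) : 𝕂))⁻¹ • ((B * C) ^ k * B))
        (∑' k : ℕ, ((Nat.factorial (2 * k + 1) : 𝕂))⁻¹ • ((C * B) ^ k * C))
        (∑' k : ℕ, ((Nat.factorial (2 * k) : 𝕂))⁻¹ • (C * B) ^ k) := by
  set M := fromBlocks 0 B C 0
  have hsum := summable_expSeries M
  have heven : Summable fun k => ((Nat.factorial (2 * k) : 𝕂)⁻¹) • M ^ (2 * k) :=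
    hsum.comp_injective (mul_right_injective₀ (two_ne_zero' ℕ))
  have hodd : Summable fun k => ((Nat.factorial (2 * k + 1) : 𝕂)⁻¹) • M ^ (2 * k + 1) :=
    hsum.comp_injective ((add_left_injective 1).comp (mul_right_injective₀ (two_ne_zero' ℕ)))
  -- `f` cannot be inferred from `fun k => f (2 * k)` by unification, so it is given explicitly.
  rw [congrFun (NormedSpace.exp_eq_tsum 𝕂) M,
    ← tsum_even_add_odd (f := fun k => ((Nat.factorial k : 𝕂)⁻¹) • M ^ k) heven hodd]
  simp only [M, fromBlocks_offDiagonal_pow_two_mul, fromBlocks_offDiagonal_pow_two_mul_add_one,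
    fromBlocks_smul, smul_zero] at heven hodd ⊢
  rw [tsum_fromBlocks heven, tsum_fromBlocks hodd, fromBlocks_add]
  simp only [tsum_zero, add_zero, zero_add]

end OffDiagonal

end Matrix

/-- Block form of the matrix exponential of `ξ(Y) = [[0, Y],[ᵀY, 0]]`. -/
theorem stmt_15 (n p : ℕ) (Y : Matrix (Fin n) (Fin p) ℝ) :
    NormedSpace.exp (fromBlocks (0 : Matrix (Fin n) (Fin n) ℝ) Y Yᵀ
        (0 : Matrix (Fin p) (Fin p) ℝ)) =
      fromBlocks
        (∑' k : ℕ, ((Nat.factorial (2 * k) : ℝ))⁻¹ • (Y * Yᵀ) ^ k)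
        (∑' k : ℕ, ((Nat.factorial (2 * k + 1) : ℝ))⁻¹ • ((Y * Yᵀ) ^ k * Y))
        (∑' k : ℕ, ((Nat.factorial (2 * k + 1) : ℝ))⁻¹ • ((Yᵀ * Y) ^ k * Yᵀ))
        (∑' k : ℕ, ((Nat.factorial (2 * k) : ℝ))⁻¹ • (Yᵀ * Y) ^ k) :=
  exp_fromBlocks_offDiagonal Y Yᵀ
end

section
/- Let Z be a real n×p matrix with ᵀZ·Z < 1_p, and set H = (1_n − Z·ᵀZ)⁻¹ and K = (1_p − ᵀZ·Z)⁻¹. Then for every real n×p matrix W: tr(W·ᵀW) ≤ tr(H·W·K·ᵀW) ≤ det(1_p − ᵀZ·Z)^{−2} · tr(W·ᵀW). -/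
/-!
Both `1 - ᵀZ Z` and `1 - Z ᵀZ` are positive definite and `≤ 1` (the second by a Schur complement
argument on the block matrix `[[1, Z], [ᵀZ, 1]]`), and they have the same determinant `d`. Their
spectra therefore lie in `(0, 1]` and `d`, the product of the eigenvalues, is at most each of
them; by functional calculus `1 ≤ H, K ≤ d⁻¹`. Finally `tr (H W K ᵀW)` is monotone in each of
`H` and `K` on positive matrices, since `tr (P Q) = tr (√Q P √Q) ≥ 0` for positive `P`, `Q`.
-/

open Matrix
open scoped MatrixOrder ComplexOrder

namespace Matrix

section Trace

variable {m n 𝕜 : Type*} [Fintype m] [Fintype n] [RCLike 𝕜]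

lemma trace_mul_nonneg {A B : Matrix n n 𝕜} (hA : 0 ≤ A) (hB : 0 ≤ B) :
    0 ≤ (A * B).trace := by
  classical
  rw [← CFC.sqrt_mul_sqrt_self B hB, ← mul_assoc, trace_mul_comm, ← mul_assoc]
  nth_rw 1 [← (CFC.sqrt_nonneg B).isSelfAdjoint.star_eq]
  exact (nonneg_iff_posSemidef.mp (star_left_conjugate_nonneg hA _)).trace_nonneg

lemma trace_mul_le_trace_mul {A A' B : Matrix n n 𝕜} (hA : A ≤ A') (hB : 0 ≤ B) :
    (A * B).trace ≤ (A' * B).trace := by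
  rw [← sub_nonneg, ← trace_sub, ← sub_mul]
  exact trace_mul_nonneg (sub_nonneg.mpr hA) hB

lemma trace_mul_mul_mul_conjTranspose_mono {H H' : Matrix m m 𝕜} {K K' : Matrix n n 𝕜}
    (hH₀ : 0 ≤ H) (hH : H ≤ H') (hK₀ : 0 ≤ K) (hK : K ≤ K') (W : Matrix m n 𝕜) :
    (H * W * K * Wᴴ).trace ≤ (H' * W * K' * Wᴴ).trace := by
  have hWKW : 0 ≤ W * K * Wᴴ :=
    nonneg_iff_posSemidef.mpr ((nonneg_iff_posSemidef.mp hK₀).mul_mul_conjTranspose_same W)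
  have hWHW : 0 ≤ Wᴴ * H' * W := nonneg_iff_posSemidef.mpr
    ((nonneg_iff_posSemidef.mp (hH₀.trans hH)).conjTranspose_mul_mul_same W)
  calc (H * W * K * Wᴴ).trace = (H * (W * K * Wᴴ)).trace := by simp only [Matrix.mul_assoc]
    _ ≤ (H' * (W * K * Wᴴ)).trace := trace_mul_le_trace_mul hH hWKW
    _ = (K * (Wᴴ * H' * W)).trace := by
        rw [trace_mul_comm, Matrix.mul_assoc, Matrix.mul_assoc, trace_mul_comm W]
        simp only [Matrix.mul_assoc]
    _ ≤ (K' * (Wᴴ * H' * W)).trace := trace_mul_le_trace_mul hK hWHW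
    _ = (H' * W * K' * Wᴴ).trace := by
        rw [trace_mul_comm, Matrix.mul_assoc, Matrix.mul_assoc, trace_mul_comm Wᴴ]
        simp only [Matrix.mul_assoc]

end Trace

section Spectrum

variable {n : Type*} [Fintype n] [DecidableEq n] {M : Matrix n n ℝ}

lemma mem_Ioc_of_mem_spectrum (hM : M.PosDef) (h1 : M ≤ 1) {x : ℝ} (hx : x ∈ spectrum ℝ M) :
    x ∈ Set.Ioc 0 1 :=
  ⟨hM.isStrictlyPositive.spectrum_pos hx,
    (le_algebraMap_iff_spectrum_le (r := (1 : ℝ))).mp (by simpa using h1) x hx⟩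

lemma det_le_of_mem_spectrum (hM : M.PosDef) (h1 : M ≤ 1) {x : ℝ} (hx : x ∈ spectrum ℝ M) :
    M.det ≤ x := by
  have hH := hM.isHermitian
  have hev (i : n) : hH.eigenvalues i ∈ Set.Ioc 0 1 :=
    mem_Ioc_of_mem_spectrum hM h1 (hH.eigenvalues_mem_spectrum_real i)
  obtain ⟨i, rfl⟩ := hH.spectrum_real_eq_range_eigenvalues ▸ hx
  rw [hH.det_eq_prod_eigenvalues, ← Finset.mul_prod_erase _ _ (Finset.mem_univ i)]
  simp only [RCLike.ofReal_real_eq_id, id_eq]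
  exact mul_le_of_le_one_right (hev i).1.le
    (Finset.prod_le_one (fun j _ => (hev j).1.le) fun j _ => (hev j).2)

lemma cfc_inv_eq_inv (hM : M.PosDef) : cfc (·⁻¹ : ℝ → ℝ) M = M⁻¹ := by
  rw [nonsing_inv_eq_ringInverse]
  exact cfc_ringInverse_id (R := ℝ) M hM.isUnit

lemma one_le_inv_of_le_one (hM : M.PosDef) (h1 : M ≤ 1) : 1 ≤ M⁻¹ := by
  rw [← cfc_inv_eq_inv hM]
  refine one_le_cfc _ _ (fun x hx => ?_) (finite_real_spectrum.continuousOn _)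
  obtain ⟨hx0, hx1⟩ := mem_Ioc_of_mem_spectrum hM h1 hx
  exact one_le_inv₀ hx0 |>.mpr hx1

lemma inv_le_inv_det_smul_one (hM : M.PosDef) (h1 : M ≤ 1) : M⁻¹ ≤ M.det⁻¹ • 1 := by
  rw [← cfc_inv_eq_inv hM, ← Algebra.algebraMap_eq_smul_one]
  refine cfc_le_algebraMap _ _ _ (fun x hx => ?_) (finite_real_spectrum.continuousOn _)
  exact inv_anti₀ hM.det_pos (det_le_of_mem_spectrum hM h1 hx)

end Spectrum

lemma PosDef.one_sub_mul_conjTranspose {m n 𝕜 : Type*} [Fintype m] [Fintype n] [DecidableEq m]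
    [DecidableEq n] [RCLike 𝕜] {Z : Matrix m n 𝕜} (h : (1 - Zᴴ * Z).PosDef) :
    (1 - Z * Zᴴ).PosDef := by
  let : Invertible (1 : Matrix m m 𝕜) := invertibleOne
  let : Invertible (1 : Matrix n n 𝕜) := invertibleOne
  have hblocks : (fromBlocks 1 Z Zᴴ 1).PosSemidef :=
    (PosDef.fromBlocks₁₁ Z 1 PosDef.one).mpr (by simpa using h.posSemidef)
  have hpsd : (1 - Z * Zᴴ).PosSemidef := by
    simpa using (PosDef.fromBlocks₂₂ 1 Z PosDef.one).mp hblocks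
  rw [hpsd.posDef_iff_det_ne_zero, det_one_sub_mul_comm]
  exact h.det_pos.ne'

end Matrix

/-- Comparison of the invariant metric `tr(H W K ᵀW)` (with `H = (1−ZᵀZᵀ…)⁻¹`,
`K = (1−ᵀZZ)⁻¹`) with the Euclidean metric `tr(W ᵀW)`. -/
theorem stmt_16 (n p : ℕ) (Z : Matrix (Fin n) (Fin p) ℝ)
    (hZ : ((1 : Matrix (Fin p) (Fin p) ℝ) - Zᵀ * Z).PosDef)
    (W : Matrix (Fin n) (Fin p) ℝ) :
    (W * Wᵀ).trace ≤
        (((1 : Matrix (Fin n) (Fin n) ℝ) - Z * Zᵀ)⁻¹ * W *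
          ((1 : Matrix (Fin p) (Fin p) ℝ) - Zᵀ * Z)⁻¹ * Wᵀ).trace ∧
      (((1 : Matrix (Fin n) (Fin n) ℝ) - Z * Zᵀ)⁻¹ * W *
          ((1 : Matrix (Fin p) (Fin p) ℝ) - Zᵀ * Z)⁻¹ * Wᵀ).trace ≤
        ((1 : Matrix (Fin p) (Fin p) ℝ) - Zᵀ * Z).det ^ (-2 : ℤ) * (W * Wᵀ).trace := by
  have hZt : Zᴴ = Zᵀ := conjTranspose_eq_transpose_of_trivial Z
  have hWt : Wᴴ = Wᵀ := conjTranspose_eq_transpose_of_trivial W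
  have hA : ((1 : Matrix (Fin n) (Fin n) ℝ) - Z * Zᵀ).PosDef :=
    hZt ▸ PosDef.one_sub_mul_conjTranspose (hZt ▸ hZ)
  have hA1 : 1 - Z * Zᵀ ≤ 1 :=
    sub_le_self _ (nonneg_iff_posSemidef.mpr (hZt ▸ posSemidef_self_mul_conjTranspose Z))
  have hB1 : 1 - Zᵀ * Z ≤ 1 :=
    sub_le_self _ (nonneg_iff_posSemidef.mpr (hZt ▸ posSemidef_conjTranspose_mul_self Z))
  have hdet : (1 - Z * Zᵀ).det = (1 - Zᵀ * Z).det := det_one_sub_mul_comm Z Zᵀ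
  have hH := one_le_inv_of_le_one hA hA1
  have hK := one_le_inv_of_le_one hZ hB1
  have hH' := hdet ▸ inv_le_inv_det_smul_one hA hA1
  have hK' := inv_le_inv_det_smul_one hZ hB1
  have h0 {k : ℕ} : (0 : Matrix (Fin k) (Fin k) ℝ) ≤ 1 := nonneg_iff_posSemidef.mpr PosSemidef.one
  have lower := trace_mul_mul_mul_conjTranspose_mono h0 hH h0 hK W
  have upper := trace_mul_mul_mul_conjTranspose_mono (h0.trans hH) hH' (h0.trans hK) hK' W
  rw [hWt] at lower upper
  simp only [Matrix.one_mul, Matrix.mul_one, smul_mul, Matrix.mul_smul, trace_smul, smul_eq_mul]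
    at lower upper
  refine ⟨lower, upper.trans_eq ?_⟩
  rw [_root_.zpow_neg, zpow_two, mul_inv, mul_assoc]
end
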